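/- arXiv:1606.09099 — 6 statements merged into one kernel-verified Lean document; each statement's English description precedes it below -/
import Mathlib

section
/- Let k be a natural number, G = (V, E) a finite graph, and B ⊆ V. Suppose the induced subgraph G[B] is k-colorable (admits a proper vertex coloring with k colors), and for every non-empty subset A ⊆ V \ B it holds that 2·|E[A]| + |E[A,B]| < k·|A|, where E[A] is the set of edges with both endpoints in A and E[A,B] is the set of edges with one endpoint in A and one in B. Then G is k-colorable. -/
open Finset

/-- Number of edges of `G` with both endpoints in `A`. -/
def edgesWithin {V : Type*} [Fintype V] [DecidableEq V] (G : SimpleGraph V)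
    [DecidableRel G.Adj] (A : Finset V) : ℕ :=
  (G.edgeFinset.filter fun e => ∀ v ∈ e, v ∈ A).card

/-- Number of edges of `G` with one endpoint in `A` and the other in `B`. -/
def edgesBetween {V : Type*} [Fintype V] [DecidableEq V] (G : SimpleGraph V)
    [DecidableRel G.Adj] (A B : Finset V) : ℕ :=
  (G.edgeFinset.filter fun e => ∃ a ∈ A, ∃ b ∈ B, e = s(a, b)).card

/-!
Colour `B` first and then add the vertices outside `B` one at a time. If `S ⊆ Bᶜ` is the
nonempty set still uncoloured, summing `#(N(v) ∩ S) + #(N(v) ∩ B)` over `v ∈ S` gives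
`2·|E[S]| + |E[S,B]| < k·|S|`, so some `v ∈ S` has fewer than `k` neighbours in `B ∪ S`.
Colour `B ∪ (S \ {v})` by induction; a colour is left over for `v`.
-/

section

variable {V : Type*} (G : SimpleGraph V)

def withinGraph (A : Finset V) : SimpleGraph V where
  Adj x y := G.Adj x y ∧ x ∈ A ∧ y ∈ A
  symm := ⟨fun _ _ h => ⟨h.1.symm, h.2.2, h.2.1⟩⟩
  loopless := ⟨fun x h => G.loopless.irrefl x h.1⟩

variable [DecidableEq V] [DecidableRel G.Adj]

instance (A : Finset V) : DecidableRel (withinGraph G A).Adj :=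
  fun x y => inferInstanceAs (Decidable (G.Adj x y ∧ x ∈ A ∧ y ∈ A))

lemma colorable_induce_insert {k : ℕ} {s : Finset V} {v : V}
    (hs : (G.induce (s : Set V)).Colorable k) (hv : #{u ∈ s | G.Adj v u} < k) :
    (G.induce ((insert v s : Finset V) : Set V)).Colorable k := by
  obtain ⟨C⟩ := hs
  let used : Finset (Fin k) :=
    {u ∈ s | G.Adj v u}.attach.image fun u => C ⟨u.1, (mem_filter.mp u.2).1⟩
  have hused : #used < #(univ : Finset (Fin k)) := by
    calc #used ≤ #{u ∈ s | G.Adj v u}.attach := card_image_le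
      _ < k := by rwa [card_attach]
      _ = #(univ : Finset (Fin k)) := by simp
  obtain ⟨c₀, -, hc₀⟩ := exists_mem_notMem_of_card_lt_card hused
  have hfree : ∀ (u : V) (hu : u ∈ s), G.Adj v u → C ⟨u, hu⟩ ≠ c₀ := fun u hu hvu heq =>
    hc₀ (mem_image.mpr ⟨⟨u, mem_filter.mpr ⟨hu, hvu⟩⟩, mem_attach _ _, heq⟩)
  refine ⟨SimpleGraph.Coloring.mk (fun x => if h : x.1 ∈ s then C ⟨x, h⟩ else c₀) ?_⟩
  rintro ⟨a, ha⟩ ⟨b, hb⟩ (hab : G.Adj a b)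
  rw [coe_insert, Set.mem_insert_iff, mem_coe] at ha hb
  dsimp only
  split_ifs with has hbs hbs
  · exact C.valid hab
  · obtain rfl := hb.resolve_right hbs
    exact hfree a has hab.symm
  · obtain rfl := ha.resolve_right has
    exact (hfree b hbs hab).symm
  · obtain rfl := ha.resolve_right has
    obtain rfl := hb.resolve_right hbs
    exact absurd rfl hab.ne

variable [Fintype V]

lemma edgeFinset_withinGraph (A : Finset V) :
    (withinGraph G A).edgeFinset = G.edgeFinset.filter fun e => ∀ v ∈ e, v ∈ A := by
  ext e
  induction e with
  | _ x y =>
    rw [SimpleGraph.mem_edgeFinset]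
    simp [withinGraph]

lemma degree_withinGraph (A : Finset V) (v : V) :
    (withinGraph G A).degree v = if v ∈ A then #{u ∈ A | G.Adj v u} else 0 := by
  rw [← SimpleGraph.card_neighborFinset_eq_degree]
  split_ifs with hv
  · congr 1
    ext u
    rw [SimpleGraph.mem_neighborFinset]
    simp [withinGraph, hv, and_comm]
  · rw [card_eq_zero]
    ext u
    rw [SimpleGraph.mem_neighborFinset]
    simp [withinGraph, hv]

lemma two_mul_edgesWithin (A : Finset V) :
    2 * edgesWithin G A = ∑ v ∈ A, #{u ∈ A | G.Adj v u} := by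
  rw [edgesWithin, ← edgeFinset_withinGraph, ← SimpleGraph.sum_degrees_eq_twice_card_edges]
  simp only [degree_withinGraph, sum_ite_mem, univ_inter]

lemma edgesBetween_eq_sum {A B : Finset V} (hAB : Disjoint A B) :
    edgesBetween G A B = ∑ v ∈ A, #{u ∈ B | G.Adj v u} := by
  rw [← card_sigma]
  refine (card_bij (fun p _ => s(p.1, p.2)) ?_ ?_ ?_).symm
  · rintro ⟨a, b⟩ hp
    simp only [mem_sigma, mem_filter] at hp
    simp only [mem_filter, SimpleGraph.mem_edgeFinset, SimpleGraph.mem_edgeSet]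
    exact ⟨hp.2.2, a, hp.1, b, hp.2.1, rfl⟩
  · rintro ⟨a, b⟩ hp ⟨a', b'⟩ hp' heq
    simp only [mem_sigma, mem_filter] at hp hp'
    rcases Sym2.eq_iff.mp heq with ⟨rfl, rfl⟩ | ⟨rfl, rfl⟩
    · rfl
    · exact absurd hp'.2.1 (disjoint_left.mp hAB hp.1)
  · intro e he
    simp only [mem_filter, SimpleGraph.mem_edgeFinset] at he
    obtain ⟨hadj, a, ha, b, hb, rfl⟩ := he
    exact ⟨⟨a, b⟩, by simpa [ha, hb] using hadj, rfl⟩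

lemma exists_card_filter_adj_lt {k : ℕ} {A B : Finset V} (hAB : Disjoint A B)
    (h : 2 * edgesWithin G A + edgesBetween G A B < k * #A) :
    ∃ v ∈ A, #{u ∈ B ∪ A | G.Adj v u} < k := by
  have hsum : ∑ v ∈ A, (#{u ∈ B | G.Adj v u} + #{u ∈ A | G.Adj v u}) < ∑ _v ∈ A, k := by
    rw [sum_add_distrib, ← two_mul_edgesWithin, ← edgesBetween_eq_sum G hAB, sum_const,
      smul_eq_mul]
    linarith [mul_comm k #A]
  obtain ⟨v, hvA, hv⟩ := exists_lt_of_sum_lt hsum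
  refine ⟨v, hvA, lt_of_le_of_lt ?_ hv⟩
  rw [filter_union]
  exact card_union_le _ _

lemma colorable_induce_union {k : ℕ} {B : Finset V}
    (hB : (G.induce (B : Set V)).Colorable k)
    (h : ∀ A : Finset V, A ⊆ Bᶜ → A.Nonempty →
      2 * edgesWithin G A + edgesBetween G A B < k * #A)
    {S : Finset V} (hS : S ⊆ Bᶜ) :
    (G.induce ((B ∪ S : Finset V) : Set V)).Colorable k := by
  induction S using strongInduction with
  | H S ih =>
    rcases S.eq_empty_or_nonempty with rfl | hne
    · rwa [union_empty]
    obtain ⟨v, hvS, hv⟩ :=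
      exists_card_filter_adj_lt G (le_compl_iff_disjoint_right.mp hS) (h S hS hne)
    have hrest := ih (S.erase v) (erase_ssubset hvS) ((erase_subset v S).trans hS)
    rw [← insert_erase hvS, union_insert]
    refine colorable_induce_insert G hrest (lt_of_le_of_lt (card_le_card ?_) hv)
    exact filter_subset_filter _ (union_subset_union (subset_refl B) (erase_subset v S))

end

theorem stmt0 {V : Type*} [Fintype V] [DecidableEq V] (G : SimpleGraph V) [DecidableRel G.Adj]
    (k : ℕ) (B : Finset V)
    (hB : (G.induce (B : Set V)).Colorable k)
    (h : ∀ A : Finset V, A ⊆ Bᶜ → A.Nonempty →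
      2 * edgesWithin G A + edgesBetween G A B < k * A.card) :
    G.Colorable k := by
  have hall := colorable_induce_union G hB h (subset_refl Bᶜ)
  rw [union_compl, coe_univ] at hall
  exact hall.of_hom G.induceUnivIso.symm.toHom
end

section
/- Let k ≥ 3 and n > k be integers, and set m = ⌈k/2⌉. If G is a complete k-partite graph on n vertices whose independence number is at most ⌈n/m⌉, then the number of edges of G is at least C(n,2)·(1 − 1/⌈k/2⌉). -/
/-!
A vertex of a complete multipartite graph is adjacent to everything outside its own part, and
that part is independent; so if independent sets have at most `t = ⌈n/m⌉` vertices, every degree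
is at least `n - t` and `2e ≥ n (n - t)`. The bound `C(n,2) (1 - 1/m) ≤ e` then reduces to
`t m ≤ n + m - 1`, which is the defining property of the ceiling.
-/

open Finset

namespace SimpleGraph

variable {V : Type*} {G : SimpleGraph V} {ι : Type*} {p : V → ι}

theorem isIndepSet_fiber_of_adj_iff (hG : ∀ u v, G.Adj u v ↔ p u ≠ p v) (i : ι) :
    G.IsIndepSet {u | p u = i} := by
  intro u hu v hv _
  simp_all

variable [Fintype V] [DecidableRel G.Adj]

theorem card_mul_le_two_mul_card_edgeFinset {d : ℕ} (h : ∀ v, d ≤ G.degree v) :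
    Fintype.card V * d ≤ 2 * #G.edgeFinset := by
  rw [← sum_degrees_eq_twice_card_edges, ← smul_eq_mul, ← card_univ, ← sum_const]
  exact sum_le_sum fun v _ => h v

theorem degree_add_card_fiber_of_adj_iff [DecidableEq ι] (hG : ∀ u v, G.Adj u v ↔ p u ≠ p v)
    (v : V) : G.degree v + #{u | p u = p v} = Fintype.card V := by
  have hnbr : G.neighborFinset v = ({u | p u ≠ p v} : Finset V) := by
    ext u
    simp [hG, eq_comm]
  rw [← card_neighborFinset_eq_degree, hnbr, add_comm,
    card_filter_add_card_filter_not, card_univ]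

theorem card_sub_le_degree_of_adj_iff [DecidableEq ι] (hG : ∀ u v, G.Adj u v ↔ p u ≠ p v)
    {t : ℕ} (hα : ∀ I : Finset V, G.IsIndepSet (I : Set V) → #I ≤ t) (v : V) :
    Fintype.card V - t ≤ G.degree v := by
  have hfiber := hα {u | p u = p v} (by simpa using isIndepSet_fiber_of_adj_iff hG (p v))
  have := degree_add_card_fiber_of_adj_iff hG v
  omega

end SimpleGraph

theorem Nat.choose_two_mul_one_sub_inv_le {n m t e : ℕ} (hm : 0 < m) (ht : t * m ≤ n + m - 1)
    (he : n * (n - t) ≤ 2 * e) : (n.choose 2 : ℚ) * (1 - 1 / m) ≤ e := by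
  replace ht : t * m + 1 ≤ n + m := by omega
  have htn : t ≤ n := by nlinarith
  have hmQ : (0 : ℚ) < m := by exact_mod_cast hm
  have heQ : (n : ℚ) * (n - t) ≤ 2 * e := by rw [← Nat.cast_sub htn]; exact_mod_cast he
  have htQ : (t : ℚ) * m + 1 ≤ n + m := by exact_mod_cast ht
  rw [Nat.cast_choose_two, ← sub_nonneg]
  have key : 2 * m * ((e : ℚ) - n * (n - 1) / 2 * (1 - 1 / m)) =
      m * (2 * e - n * (n - t)) + n * (n + m - (t * m + 1)) := by
    field_simp
    ring
  have : 0 ≤ 2 * m * ((e : ℚ) - n * (n - 1) / 2 * (1 - 1 / m)) := by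
    rw [key]
    exact add_nonneg (mul_nonneg hmQ.le (sub_nonneg.2 heQ))
      (mul_nonneg (Nat.cast_nonneg n) (sub_nonneg.2 htQ))
  exact (mul_nonneg_iff_of_pos_left (by positivity)).1 this

theorem stmt5_general {V : Type*} [Fintype V] (G : SimpleGraph V) [DecidableRel G.Adj]
    (n k : ℕ) (hk : 3 ≤ k) (hcard : Fintype.card V = n)
    (p : V → Fin k) (hG : ∀ u v : V, G.Adj u v ↔ p u ≠ p v)
    (hind : ∀ I : Finset V, (∀ u ∈ I, ∀ v ∈ I, u ≠ v → ¬ G.Adj u v) →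
      I.card ≤ (n + (k + 1) / 2 - 1) / ((k + 1) / 2)) :
    ((n.choose 2 : ℚ)) * (1 - 1 / (((k + 1) / 2 : ℕ) : ℚ)) ≤ (G.edgeFinset.card : ℚ) := by
  set m := (k + 1) / 2
  have hα : ∀ I : Finset V, G.IsIndepSet (I : Set V) → #I ≤ (n + m - 1) / m :=
    fun I hI => hind I fun u hu v hv huv => hI hu hv huv
  have hdeg := G.card_sub_le_degree_of_adj_iff hG hα
  rw [hcard] at hdeg
  have hedges := G.card_mul_le_two_mul_card_edgeFinset hdeg
  rw [hcard] at hedges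
  exact Nat.choose_two_mul_one_sub_inv_le (by omega) (Nat.div_mul_le_self _ _) hedges

theorem stmt5 {V : Type*} [Fintype V] [DecidableEq V] (G : SimpleGraph V) [DecidableRel G.Adj]
    (n k : ℕ) (hk : 3 ≤ k) (hn : k < n) (hcard : Fintype.card V = n)
    (p : V → Fin k) (hG : ∀ u v : V, G.Adj u v ↔ p u ≠ p v)
    (hind : ∀ I : Finset V, (∀ u ∈ I, ∀ v ∈ I, u ≠ v → ¬ G.Adj u v) →
      I.card ≤ (n + (k + 1) / 2 - 1) / ((k + 1) / 2)) :
    ((n.choose 2 : ℚ)) * (1 - 1 / (((k + 1) / 2 : ℕ) : ℚ)) ≤ (G.edgeFinset.card : ℚ) :=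
  stmt5_general G n k hk hcard p hG hind
end

section
/- Let k ≥ 4 and n > k be integers, and set ℓ = ⌊(k−1)/3⌋. If G is a complete k-partite graph on n vertices in which at least ℓ vertices have degree n−1 (equivalently, at least ℓ of the parts are singletons), then the number of edges of G is at most C(n,2)·(1 − 1/(k−ℓ)) + n. -/
/-! Each vertex is adjacent exactly to the vertices outside its part, so `2|E| = n² - ∑ fᵢ²` for the
part sizes `fᵢ`. A vertex of degree `n - 1` is alone in its part, so at least `ℓ` parts have size `1`,
and Cauchy–Schwarz on the other `k - ℓ` parts gives `(k - ℓ) (∑ fᵢ² - ℓ) ≥ (n - ℓ)²`. Since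
`k - ℓ ≥ 2ℓ + 1`, this lower bound on `∑ fᵢ²` yields the claimed upper bound on `|E|`. -/

open Finset

namespace SimpleGraph

variable {V ι : Type*} [Fintype V] [DecidableEq ι] {G : SimpleGraph V} [DecidableRel G.Adj]
  {p : V → ι}

theorem degree_add_card_fiber (hG : ∀ u v, G.Adj u v ↔ p u ≠ p v) (v : V) :
    G.degree v + #{u | p u = p v} = Fintype.card V := by
  have hdeg : G.degree v = #{u | ¬p u = p v} := by
    rw [← card_neighborFinset_eq_degree, neighborFinset_eq_filter]
    simp only [hG, ne_comm]
  rw [hdeg, add_comm, card_filter_add_card_filter_not, card_univ]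

theorem card_fiber_eq_one_of_degree_eq (hG : ∀ u v, G.Adj u v ↔ p u ≠ p v) {v : V}
    (hv : G.degree v = Fintype.card V - 1) : #{u | p u = p v} = 1 := by
  have := degree_add_card_fiber hG v
  have : 0 < Fintype.card V := Fintype.card_pos_iff.2 ⟨v⟩
  omega

theorem card_filter_degree_le_card_singleton_parts [Fintype ι]
    (hG : ∀ u v, G.Adj u v ↔ p u ≠ p v) :
    #{v | G.degree v = Fintype.card V - 1} ≤ #{i | #{v | p v = i} = 1} := by
  refine card_le_card_of_injOn p (fun v hv => ?_) fun u hu v hv huv => ?_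
  · simpa using card_fiber_eq_one_of_degree_eq hG (mem_filter.1 hv).2
  · have hsingle := card_fiber_eq_one_of_degree_eq hG (mem_filter.1 (mem_coe.1 hu)).2
    exact card_le_one.1 hsingle.le u (by simp) v (by simp [huv])

theorem two_mul_card_edgeFinset_add_sum_sq [DecidableEq V] [Fintype ι]
    (hG : ∀ u v, G.Adj u v ↔ p u ≠ p v) :
    2 * #G.edgeFinset + ∑ i, #{v | p v = i} ^ 2 = Fintype.card V ^ 2 := by
  have hsq : ∑ v, #{u | p u = p v} = ∑ i, #{v | p v = i} ^ 2 := by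
    rw [← sum_fiberwise univ p fun v => #{u | p u = p v}]
    refine sum_congr rfl fun i _ => ?_
    rw [sum_congr rfl fun v hv => by rw [(mem_filter.1 hv).2], sum_const, smul_eq_mul, sq]
  rw [← sum_degrees_eq_twice_card_edges, ← hsq, ← sum_add_distrib,
    sum_congr rfl fun v _ => degree_add_card_fiber hG v, sum_const, card_univ, smul_eq_mul, sq]

end SimpleGraph

theorem sq_sum_sub_card_le_of_eq_one_on {ι R : Type*} [Fintype ι] [DecidableEq ι] [Field R]
    [LinearOrder R] [IsStrictOrderedRing R] {f : ι → R} {T : Finset ι}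
    (hT : ∀ i ∈ T, f i = 1) :
    (∑ i, f i - #T) ^ 2 ≤ (Fintype.card ι - #T) * (∑ i, f i ^ 2 - #T) := by
  have hsum : ∑ i, f i - #T = ∑ i ∈ Tᶜ, f i := by
    rw [← sum_compl_add_sum T, sum_congr rfl hT]; simp
  have hsum_sq : ∑ i, f i ^ 2 - #T = ∑ i ∈ Tᶜ, f i ^ 2 := by
    rw [← sum_compl_add_sum T, sum_congr rfl fun i (hi : i ∈ T) => by rw [hT i hi, one_pow]]
    simp
  have hcard : (Fintype.card ι : R) - #T = #Tᶜ := by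
    rw [card_compl, Nat.cast_sub (card_le_univ T)]
  rw [hsum, hsum_sq, hcard]
  exact sq_sum_le_card_mul_sum_sq

theorem le_choose_two_mul_add_of_sq_le {E S n ℓ m : ℚ} (hℓ : 0 ≤ ℓ) (hm : 2 * ℓ + 1 ≤ m)
    (hn : 0 ≤ n) (hES : 2 * E + S = n ^ 2) (hS : (n - ℓ) ^ 2 ≤ m * (S - ℓ)) :
    E ≤ n * (n - 1) / 2 * (1 - 1 / m) + n := by
  have hm0 : 0 < m := by linarith
  rw [show n * (n - 1) / 2 * (1 - 1 / m) + n = (n * (n - 1) * (m - 1) + 2 * n * m) / (2 * m) by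
    field_simp, le_div_iff₀ (by positivity)]
  nlinarith [mul_nonneg hn (by linarith : 0 ≤ m - 2 * ℓ - 1), mul_nonneg hℓ hm0.le]

theorem stmt6_general {V : Type*} [Fintype V] [DecidableEq V] (G : SimpleGraph V) [DecidableRel G.Adj]
    (n k : ℕ) (hk : 4 ≤ k) (hcard : Fintype.card V = n)
    (p : V → Fin k) (hG : ∀ u v : V, G.Adj u v ↔ p u ≠ p v)
    (hdeg : (k - 1) / 3 ≤ (univ.filter fun v => G.degree v = n - 1).card) :
    (G.edgeFinset.card : ℚ) ≤
      (n.choose 2 : ℚ) * (1 - 1 / ((k : ℚ) - (((k - 1) / 3 : ℕ) : ℚ))) + n := by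
  subst hcard
  set ℓ := (k - 1) / 3
  set f : Fin k → ℚ := fun i => #{v | p v = i}
  obtain ⟨T, hTsub, hTcard⟩ :=
    exists_subset_card_eq (hdeg.trans (SimpleGraph.card_filter_degree_le_card_singleton_parts hG))
  have hT : ∀ i ∈ T, f i = 1 := fun i hi => by simp [f, (mem_filter.1 (hTsub hi)).2]
  have hsum : ∑ i, f i = Fintype.card V := by
    simp only [f]; rw [← Nat.cast_sum, ← card_eq_sum_card_fiberwise (by simp), card_univ]
  have hsq := sq_sum_sub_card_le_of_eq_one_on hT
  rw [hsum, hTcard, Fintype.card_fin] at hsq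
  have hedges := SimpleGraph.two_mul_card_edgeFinset_add_sum_sq hG
  rw [Nat.cast_choose_two]
  refine le_choose_two_mul_add_of_sq_le (by positivity) ?_ (by positivity) ?_ hsq
  · have hℓk : (3 * ℓ + 1 : ℚ) ≤ k := by exact_mod_cast (by omega : 3 * ℓ + 1 ≤ k)
    linarith
  · simpa [f] using congrArg (Nat.cast : ℕ → ℚ) hedges

theorem stmt6 {V : Type*} [Fintype V] [DecidableEq V] (G : SimpleGraph V) [DecidableRel G.Adj]
    (n k : ℕ) (hk : 4 ≤ k) (hn : k < n) (hcard : Fintype.card V = n)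
    (p : V → Fin k) (hG : ∀ u v : V, G.Adj u v ↔ p u ≠ p v)
    (hdeg : (k - 1) / 3 ≤ (univ.filter fun v => G.degree v = n - 1).card) :
    (G.edgeFinset.card : ℚ) ≤
      (n.choose 2 : ℚ) * (1 - 1 / ((k : ℚ) - (((k - 1) / 3 : ℕ) : ℚ))) + n :=
  stmt6_general G n k hk hcard p hG hdeg
end

section
/- Let V be a finite set, f : V → ℕ, B ⊆ V, and G a graph on V such that Σ_{v∈A} f(v) ≥ φ(A) := |E[A]| + |E[A,B]| for all A ⊆ V \ B. Let G' = G + e for a new edge e, let φ' be the φ-function of G', and let 𝒞 = { A ⊆ V \ B : Σ_{v∈A} f(v) < φ'(A) }. If 𝒞 is non-empty, then the intersection A' = ⋂_{A ∈ 𝒞} A is non-empty and A' ∈ 𝒞. -/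
open Finset

section Aux
variable {V : Type*} [Fintype V] [DecidableEq V]

lemma supermod (G : SimpleGraph V) [DecidableRel G.Adj] (B A C : Finset V)
    (hA : A ⊆ Bᶜ) :
    (edgesWithin G A + edgesBetween G A B) + (edgesWithin G C + edgesBetween G C B) ≤
      (edgesWithin G (A ∩ C) + edgesBetween G (A ∩ C) B) +
        (edgesWithin G (A ∪ C) + edgesBetween G (A ∪ C) B) := by
  classical
  have hw : edgesWithin G A + edgesWithin G C ≤
      edgesWithin G (A ∩ C) + edgesWithin G (A ∪ C) := by
    unfold edgesWithin
    have key := Finset.card_inter_add_card_union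
      (G.edgeFinset.filter fun e => ∀ x ∈ e, x ∈ A)
      (G.edgeFinset.filter fun e => ∀ x ∈ e, x ∈ C)
    have h1 : (G.edgeFinset.filter fun e => ∀ x ∈ e, x ∈ A) ∩
        (G.edgeFinset.filter fun e => ∀ x ∈ e, x ∈ C) =
        G.edgeFinset.filter (fun e => ∀ x ∈ e, x ∈ A ∩ C) := by
      ext e
      simp only [Finset.mem_inter, Finset.mem_filter]
      constructor
      · rintro ⟨⟨he, ha⟩, _, hc⟩
        exact ⟨he, fun x hx => ⟨ha x hx, hc x hx⟩⟩
      · rintro ⟨he, h⟩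
        exact ⟨⟨he, fun x hx => (h x hx).1⟩, he, fun x hx => (h x hx).2⟩
    have h2 : (G.edgeFinset.filter fun e => ∀ x ∈ e, x ∈ A) ∪
        (G.edgeFinset.filter fun e => ∀ x ∈ e, x ∈ C) ⊆
        G.edgeFinset.filter (fun e => ∀ x ∈ e, x ∈ A ∪ C) := by
      intro e he
      rcases Finset.mem_union.mp he with h | h <;>
        · rw [Finset.mem_filter] at h ⊢
          exact ⟨h.1, fun x hx => Finset.mem_union.mpr (by tauto)⟩
    calc (G.edgeFinset.filter fun e => ∀ x ∈ e, x ∈ A).card +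
          (G.edgeFinset.filter fun e => ∀ x ∈ e, x ∈ C).card
        = ((G.edgeFinset.filter fun e => ∀ x ∈ e, x ∈ A) ∩
            (G.edgeFinset.filter fun e => ∀ x ∈ e, x ∈ C)).card +
          ((G.edgeFinset.filter fun e => ∀ x ∈ e, x ∈ A) ∪
            (G.edgeFinset.filter fun e => ∀ x ∈ e, x ∈ C)).card := key.symm
      _ ≤ _ := by
          rw [h1]
          exact Nat.add_le_add le_rfl (Finset.card_le_card h2)
  have hb : edgesBetween G A B + edgesBetween G C B ≤
      edgesBetween G (A ∩ C) B + edgesBetween G (A ∪ C) B := by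
    unfold edgesBetween
    have key := Finset.card_inter_add_card_union
      (G.edgeFinset.filter fun e => ∃ a ∈ A, ∃ b ∈ B, e = s(a, b))
      (G.edgeFinset.filter fun e => ∃ a ∈ C, ∃ b ∈ B, e = s(a, b))
    have h1 : (G.edgeFinset.filter fun e => ∃ a ∈ A, ∃ b ∈ B, e = s(a, b)) ∩
        (G.edgeFinset.filter fun e => ∃ a ∈ C, ∃ b ∈ B, e = s(a, b)) ⊆
        G.edgeFinset.filter (fun e => ∃ a ∈ A ∩ C, ∃ b ∈ B, e = s(a, b)) := by
      intro e he
      rw [Finset.mem_inter, Finset.mem_filter, Finset.mem_filter] at he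
      obtain ⟨⟨he1, a, ha, b, hb, rfl⟩, _, a', ha', b', hb', heq⟩ := he
      rw [Sym2.eq_iff] at heq
      rw [Finset.mem_filter]
      rcases heq with ⟨rfl, rfl⟩ | ⟨rfl, rfl⟩
      · exact ⟨he1, a, Finset.mem_inter.mpr ⟨ha, ha'⟩, b, hb, rfl⟩
      · exact absurd hb' (by simpa using hA ha)
    have h2 : (G.edgeFinset.filter fun e => ∃ a ∈ A, ∃ b ∈ B, e = s(a, b)) ∪
        (G.edgeFinset.filter fun e => ∃ a ∈ C, ∃ b ∈ B, e = s(a, b)) ⊆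
        G.edgeFinset.filter (fun e => ∃ a ∈ A ∪ C, ∃ b ∈ B, e = s(a, b)) := by
      intro e he
      rcases Finset.mem_union.mp he with h | h <;>
        · rw [Finset.mem_filter] at h ⊢
          obtain ⟨he1, a, ha, b, hb, rfl⟩ := h
          exact ⟨he1, a, Finset.mem_union.mpr (by tauto), b, hb, rfl⟩
    calc (G.edgeFinset.filter fun e => ∃ a ∈ A, ∃ b ∈ B, e = s(a, b)).card +
          (G.edgeFinset.filter fun e => ∃ a ∈ C, ∃ b ∈ B, e = s(a, b)).card
        = _ + _ := key.symm
      _ ≤ _ := Nat.add_le_add (Finset.card_le_card h1) (Finset.card_le_card h2)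
  omega

lemma phi'_eq (G G' : SimpleGraph V) [DecidableRel G.Adj] [DecidableRel G'.Adj]
    (B : Finset V) (u v : V) (hnadj : ¬ G.Adj u v)
    (hG' : ∀ a b : V, G'.Adj a b ↔ G.Adj a b ∨ (a = u ∧ b = v) ∨ (a = v ∧ b = u))
    (A : Finset V) :
    edgesWithin G' A + edgesBetween G' A B =
      edgesWithin G A + edgesBetween G A B +
        ((if u ∈ A ∧ v ∈ A then 1 else 0) +
         (if (u ∈ A ∧ v ∈ B) ∨ (v ∈ A ∧ u ∈ B) then 1 else 0)) := by
  classical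
  have hE : G'.edgeFinset = insert s(u, v) G.edgeFinset := by
    ext e
    induction e using Sym2.ind with
    | _ a b =>
      simp only [SimpleGraph.mem_edgeFinset, SimpleGraph.mem_edgeSet, hG',
        Finset.mem_insert, Sym2.eq_iff]
      tauto
  have hsv : s(u, v) ∉ G.edgeFinset := by
    simpa [SimpleGraph.mem_edgeFinset, SimpleGraph.mem_edgeSet] using hnadj
  have hcard : ∀ (p : Sym2 V → Prop) [DecidablePred p],
      ((insert s(u,v) G.edgeFinset).filter p).card =
        (G.edgeFinset.filter p).card + (if p s(u,v) then 1 else 0) := by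
    intro p _
    rw [Finset.filter_insert]
    split_ifs with h
    · rw [Finset.card_insert_of_notMem (fun hm => hsv (Finset.mem_filter.mp hm).1)]
    · rfl
  have hw : edgesWithin G' A = edgesWithin G A + (if u ∈ A ∧ v ∈ A then 1 else 0) := by
    unfold edgesWithin
    rw [hE, hcard]
    congr 1
    have : (∀ x ∈ s(u,v), x ∈ A) ↔ u ∈ A ∧ v ∈ A := by
      constructor
      · intro h; exact ⟨h u (by simp), h v (by simp)⟩
      · rintro ⟨h1, h2⟩ x hx
        rcases Sym2.mem_iff.mp hx with rfl | rfl <;> assumption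
    exact if_congr this rfl rfl
  have hb : edgesBetween G' A B = edgesBetween G A B +
      (if (u ∈ A ∧ v ∈ B) ∨ (v ∈ A ∧ u ∈ B) then 1 else 0) := by
    unfold edgesBetween
    rw [hE, hcard]
    congr 1
    have : (∃ a ∈ A, ∃ b ∈ B, s(u,v) = s(a, b)) ↔
        (u ∈ A ∧ v ∈ B) ∨ (v ∈ A ∧ u ∈ B) := by
      constructor
      · rintro ⟨a, ha, b, hb, heq⟩
        rw [Sym2.eq_iff] at heq
        rcases heq with ⟨rfl, rfl⟩ | ⟨rfl, rfl⟩ <;> tauto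
      · rintro (⟨h1, h2⟩ | ⟨h1, h2⟩)
        · exact ⟨u, h1, v, h2, rfl⟩
        · exact ⟨v, h1, u, h2, Sym2.eq_swap⟩
    exact if_congr this rfl rfl
  omega

end Aux

theorem stmt11 {V : Type*} [Fintype V] [DecidableEq V]
    (G G' : SimpleGraph V) [DecidableRel G.Adj] [DecidableRel G'.Adj]
    (f : V → ℕ) (B : Finset V) (u v : V) (huv : u ≠ v) (hnadj : ¬ G.Adj u v)
    (hG' : ∀ a b : V, G'.Adj a b ↔ G.Adj a b ∨ (a = u ∧ b = v) ∨ (a = v ∧ b = u))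
    (hf : ∀ A : Finset V, A ⊆ Bᶜ →
      edgesWithin G A + edgesBetween G A B ≤ ∑ x ∈ A, f x)
    (hne : ∃ A : Finset V, A ⊆ Bᶜ ∧
      (∑ x ∈ A, f x) < edgesWithin G' A + edgesBetween G' A B) :
    ∃ A' : Finset V, A'.Nonempty ∧ A' ⊆ Bᶜ ∧
      (∑ x ∈ A', f x) < edgesWithin G' A' + edgesBetween G' A' B ∧
      ∀ A : Finset V, A ⊆ Bᶜ →
        (∑ x ∈ A, f x) < edgesWithin G' A + edgesBetween G' A B → A' ⊆ A := by
  classical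
  -- facts about deficient sets
  have key : ∀ A : Finset V, A ⊆ Bᶜ →
      (∑ x ∈ A, f x) < edgesWithin G' A + edgesBetween G' A B →
      (∑ x ∈ A, f x) = edgesWithin G A + edgesBetween G A B ∧
      ((u ∈ A ∧ v ∈ A) ∨ (u ∈ A ∧ v ∈ B) ∨ (v ∈ A ∧ u ∈ B)) := by
    intro A hA hdef
    have heq := phi'_eq G G' B u v hnadj hG' A
    have hle := hf A hA
    have hAB : ∀ x ∈ A, x ∉ B := fun x hx => by simpa using hA hx
    have h12 : ¬ ((u ∈ A ∧ v ∈ A) ∧ ((u ∈ A ∧ v ∈ B) ∨ (v ∈ A ∧ u ∈ B))) := by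
      rintro ⟨⟨hu, hv⟩, (⟨-, hb⟩ | ⟨-, hb⟩)⟩
      exacts [hAB v hv hb, hAB u hu hb]
    have hcond : (u ∈ A ∧ v ∈ A) ∨ ((u ∈ A ∧ v ∈ B) ∨ (v ∈ A ∧ u ∈ B)) := by
      by_contra hc
      rw [not_or] at hc
      rw [heq, if_neg hc.1, if_neg hc.2] at hdef
      omega
    have hsle : (if u ∈ A ∧ v ∈ A then 1 else 0) +
        (if (u ∈ A ∧ v ∈ B) ∨ (v ∈ A ∧ u ∈ B) then 1 else 0) ≤ 1 := by
      by_cases h1 : u ∈ A ∧ v ∈ A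
      · rw [if_pos h1, if_neg (fun h2 => h12 ⟨h1, h2⟩)]
      · rw [if_neg h1]
        split_ifs <;> omega
    refine ⟨by omega, by tauto⟩
  -- closure under intersection
  have inter_def : ∀ A C : Finset V, A ⊆ Bᶜ → C ⊆ Bᶜ →
      (∑ x ∈ A, f x) < edgesWithin G' A + edgesBetween G' A B →
      (∑ x ∈ C, f x) < edgesWithin G' C + edgesBetween G' C B →
      (∑ x ∈ A ∩ C, f x) < edgesWithin G' (A ∩ C) + edgesBetween G' (A ∩ C) B := by
    intro A C hA hC hdA hdC
    obtain ⟨htA, hcA⟩ := key A hA hdA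
    obtain ⟨htC, hcC⟩ := key C hC hdC
    have hAB : ∀ x ∈ A, x ∉ B := fun x hx => by simpa using hA hx
    have hCB : ∀ x ∈ C, x ∉ B := fun x hx => by simpa using hC hx
    have hcond : (u ∈ A ∩ C ∧ v ∈ A ∩ C) ∨ (u ∈ A ∩ C ∧ v ∈ B) ∨
        (v ∈ A ∩ C ∧ u ∈ B) := by
      rcases hcA with ⟨h1, h2⟩ | ⟨h1, h2⟩ | ⟨h1, h2⟩ <;>
        rcases hcC with ⟨h3, h4⟩ | ⟨h3, h4⟩ | ⟨h3, h4⟩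
      · exact Or.inl ⟨Finset.mem_inter.mpr ⟨h1, h3⟩, Finset.mem_inter.mpr ⟨h2, h4⟩⟩
      · exact absurd h4 (hAB v h2)
      · exact absurd h4 (hAB u h1)
      · exact absurd h2 (hCB v h4)
      · exact Or.inr (Or.inl ⟨Finset.mem_inter.mpr ⟨h1, h3⟩, h2⟩)
      · exact absurd h4 (hAB u h1)
      · exact absurd h2 (hCB u h3)
      · exact absurd h2 (hCB u h3)
      · exact Or.inr (Or.inr ⟨Finset.mem_inter.mpr ⟨h1, h3⟩, h2⟩)
    -- tightness of the intersection
    have hsup := supermod G B A C hA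
    have hUnion := hf (A ∪ C) (Finset.union_subset hA hC)
    have hsum : (∑ x ∈ A ∪ C, f x) + (∑ x ∈ A ∩ C, f x) =
        (∑ x ∈ A, f x) + (∑ x ∈ C, f x) := Finset.sum_union_inter
    have htight : edgesWithin G (A ∩ C) + edgesBetween G (A ∩ C) B ≥
        ∑ x ∈ A ∩ C, f x := by omega
    have heq := phi'_eq G G' B u v hnadj hG' (A ∩ C)
    rcases hcond with h | h
    · have : (if u ∈ A ∩ C ∧ v ∈ A ∩ C then 1 else 0) = 1 := if_pos h
      omega
    · have : (if (u ∈ A ∩ C ∧ v ∈ B) ∨ (v ∈ A ∩ C ∧ u ∈ B) then 1 else 0) = 1 :=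
        if_pos h
      omega
  -- pick a deficient set of minimum cardinality
  set D : Finset (Finset V) := Finset.univ.filter (fun A => A ⊆ Bᶜ ∧
      (∑ x ∈ A, f x) < edgesWithin G' A + edgesBetween G' A B) with hD
  have hDne : D.Nonempty := by
    obtain ⟨A, hA, hd⟩ := hne
    exact ⟨A, by simp [hD, hA, hd]⟩
  obtain ⟨A', hA'D, hmin⟩ := Finset.exists_min_image D Finset.card hDne
  rw [hD, Finset.mem_filter] at hA'D
  obtain ⟨-, hA'B, hA'd⟩ := hA'D
  have hsubset : ∀ A : Finset V, A ⊆ Bᶜ →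
      (∑ x ∈ A, f x) < edgesWithin G' A + edgesBetween G' A B → A' ⊆ A := by
    intro A hA hd
    have hid := inter_def A' A hA'B hA hA'd hd
    have hmem : A' ∩ A ∈ D := by
      rw [hD, Finset.mem_filter]
      exact ⟨Finset.mem_univ _, (Finset.inter_subset_left).trans hA'B, hid⟩
    have hcard := hmin _ hmem
    have : A' ∩ A = A' :=
      Finset.eq_of_subset_of_card_le Finset.inter_subset_left hcard
    intro x hx
    rw [← this] at hx
    exact Finset.mem_inter.mp hx |>.2
  refine ⟨A', ?_, hA'B, hA'd, hsubset⟩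
  obtain ⟨-, hc⟩ := key A' hA'B hA'd
  rcases hc with ⟨h, -⟩ | ⟨h, -⟩ | ⟨h, -⟩ <;> exact ⟨_, h⟩
end

section
/- Let V be a finite set, f : V → ℕ, B ⊆ V, and G a graph on V with Σ_{v∈A} f(v) ≥ φ(A) for all A ⊆ V \ B, where φ(A) = |E[A]| + |E[A,B]|. Let G' = G + e, φ' the φ-function of G', 𝒞 the family of A ⊆ V \ B with Σ_{v∈A} f(v) < φ'(A), assumed non-empty, and A' = ⋂_{A∈𝒞} A. Then for every A ⊆ V \ (B ∪ A'), one has Σ_{v∈A} f(v) ≥ φ'(A ∪ A') − φ'(A'). -/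
open Finset

theorem stmt12 {V : Type*} [Fintype V] [DecidableEq V]
    (G G' : SimpleGraph V) [DecidableRel G.Adj] [DecidableRel G'.Adj]
    (f : V → ℕ) (B : Finset V) (u v : V) (huv : u ≠ v) (hnadj : ¬ G.Adj u v)
    (hG' : ∀ a b : V, G'.Adj a b ↔ G.Adj a b ∨ (a = u ∧ b = v) ∨ (a = v ∧ b = u))
    (hf : ∀ A : Finset V, A ⊆ Bᶜ →
      edgesWithin G A + edgesBetween G A B ≤ ∑ x ∈ A, f x)
    (A' : Finset V) (hA'sub : A' ⊆ Bᶜ)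
    (hA'def : (∑ x ∈ A', f x) < edgesWithin G' A' + edgesBetween G' A' B)
    (hA'min : ∀ A : Finset V, A ⊆ Bᶜ →
      (∑ x ∈ A, f x) < edgesWithin G' A + edgesBetween G' A B → A' ⊆ A) :
    ∀ A : Finset V, A ⊆ Bᶜ → Disjoint A A' →
      ((edgesWithin G' (A ∪ A') + edgesBetween G' (A ∪ A') B : ℕ) : ℤ) -
        ((edgesWithin G' A' + edgesBetween G' A' B : ℕ) : ℤ) ≤ ∑ x ∈ A, (f x : ℤ) := by
  intro A hA hdisj
  set e0 : Sym2 V := s(u, v) with he0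
  have hEF : G'.edgeFinset = insert e0 G.edgeFinset := by
    ext e
    induction e using Sym2.ind with
    | _ a b =>
      simp only [SimpleGraph.mem_edgeFinset, SimpleGraph.mem_edgeSet, hG', mem_insert, he0,
        Sym2.eq_iff]
      tauto
  have he0nm : e0 ∉ G.edgeFinset := by
    simp [he0, SimpleGraph.mem_edgeFinset, hnadj]
  have hW : ∀ S : Finset V, edgesWithin G' S =
      edgesWithin G S + (if ∀ x ∈ e0, x ∈ S then 1 else 0) := by
    intro S
    unfold edgesWithin
    rw [hEF, filter_insert]
    split
    · rw [card_insert_of_notMem fun h => he0nm (mem_filter.mp h).1]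
    · rw [Nat.add_zero]
  have hB : ∀ S : Finset V, edgesBetween G' S B =
      edgesBetween G S B + (if ∃ a ∈ S, ∃ b ∈ B, e0 = s(a, b) then 1 else 0) := by
    intro S
    unfold edgesBetween
    rw [hEF, filter_insert]
    split
    · rw [card_insert_of_notMem fun h => he0nm (mem_filter.mp h).1]
    · rw [Nat.add_zero]
  have hphi : ∀ S : Finset V, S ⊆ Bᶜ →
      edgesWithin G' S + edgesBetween G' S B ≤
        edgesWithin G S + edgesBetween G S B + 1 := by
    intro S hS
    rw [hW, hB]
    by_cases hw : ∀ x ∈ e0, x ∈ S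
    · have hnb : ¬ ∃ a ∈ S, ∃ b ∈ B, e0 = s(a, b) := by
        rintro ⟨a, ha, b, hb, hab⟩
        have hbS : b ∈ S := hw b (by rw [hab]; simp)
        exact (mem_compl.mp (hS hbS)) hb
      rw [if_pos hw, if_neg hnb]
      omega
    · simp only [hw, if_false]
      split <;> omega
  have hAA'sub : A ∪ A' ⊆ Bᶜ := union_subset hA hA'sub
  have key1 : edgesWithin G' (A ∪ A') + edgesBetween G' (A ∪ A') B ≤
      (∑ x ∈ A, f x) + (∑ x ∈ A', f x) + 1 := by
    have h1 := hphi (A ∪ A') hAA'sub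
    have h2 := hf (A ∪ A') hAA'sub
    rw [sum_union hdisj] at h2
    omega
  have key2 : (∑ x ∈ A', f x) + 1 ≤ edgesWithin G' A' + edgesBetween G' A' B := hA'def
  have hsum : ∑ x ∈ A, (f x : ℤ) = ((∑ x ∈ A, f x : ℕ) : ℤ) := by push_cast; ring
  rw [hsum]
  omega
end

section
/- Let G be a finite graph on vertex set V and B ⊆ V such that G[B] is k-colorable, the induced subgraph on B \ S is (k−ℓ)-colorable for some S ⊆ B with |S| ≤ ℓ, and for every non-empty A ⊆ V \ B it holds 2|E[A]| + |E[A, B \ S]| < (k−ℓ)|A|. Then the induced subgraph of G on V \ S is (k−ℓ)-colorable, and consequently if additionally every vertex of S is adjacent to all of V \ S and S induces a clique, G itself is k-colorable. -/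
/-!
Every nonempty `A ⊆ V \ B` contains a vertex with fewer than `k - ℓ` neighbours in
`A ∪ (B \ S)`: doubling `E[A]` and adding `E[A, B \ S]` sums exactly these degrees over `A`.
Hence the vertices outside `B` can be peeled off one at a time, and putting them back in reverse
order extends a `(k - ℓ)`-colouring of `B \ S` greedily to `(V \ B) ∪ (B \ S) = V \ S`.
Giving the at most `ℓ` vertices of `S` pairwise distinct fresh colours yields a `k`-colouring
of `G`.
-/

open Finset

namespace SimpleGraph

variable {V : Type*} {G : SimpleGraph V}

-- ℕ-valued rather than `Fin n`-valued: for `n = 0` there is no map `V → Fin 0`, yet the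
-- empty induced subgraph is `0`-colorable.
theorem colorable_induce_iff_exists_bdd_nat {s : Set V} {n : ℕ} :
    (G.induce s).Colorable n ↔
      ∃ f : V → ℕ, (∀ v ∈ s, f v < n) ∧ ∀ v ∈ s, ∀ w ∈ s, G.Adj v w → f v ≠ f w := by
  classical
  rw [colorable_iff_exists_bdd_nat_coloring]
  constructor
  · rintro ⟨C, hC⟩
    refine ⟨fun v => if hv : v ∈ s then C ⟨v, hv⟩ else 0, fun v hv => ?_,
      fun v hv w hw hvw => ?_⟩
    · simpa [hv] using hC ⟨v, hv⟩
    · simpa [hv, hw] using C.valid (v := ⟨v, hv⟩) (w := ⟨w, hw⟩) hvw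
  · rintro ⟨f, hf, hproper⟩
    exact ⟨Coloring.mk (fun v => f v) fun {v w} hvw => hproper v v.2 w w.2 hvw,
      fun v => hf v v.2⟩

theorem colorable_add_card_of_colorable_induce_compl [Fintype V] [DecidableEq V] {S : Finset V}
    {n : ℕ} (h : (G.induce ((Sᶜ : Finset V) : Set V)).Colorable n) : G.Colorable (n + #S) := by
  obtain ⟨f, hf, hproper⟩ := colorable_induce_iff_exists_bdd_nat.1 h
  simp only [coe_compl, Set.mem_compl_iff, mem_coe] at hf hproper
  rw [colorable_iff_exists_bdd_nat_coloring]
  refine ⟨.mk (fun v => if hv : v ∈ S then n + S.equivFin ⟨v, hv⟩ else f v) ?_, ?_⟩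
  · intro a b hab
    split_ifs with ha hb hb
    · rw [Ne, add_right_inj, Fin.val_inj, S.equivFin.apply_eq_iff_eq, Subtype.mk.injEq]
      exact hab.ne
    · have := hf b hb; omega
    · have := hf a ha; omega
    · exact hproper a ha b hb hab
  · intro v
    show (if hv : v ∈ S then n + (S.equivFin ⟨v, hv⟩ : ℕ) else f v) < n + #S
    split_ifs with hv
    · have := (S.equivFin ⟨v, hv⟩).isLt; omega
    · have := hf v hv; omega

variable [DecidableRel G.Adj]

theorem card_interedges_eq_sum (A C : Finset V) :
    #(G.interedges A C) = ∑ a ∈ A, #(C.filter (G.Adj a)) := by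
  simp only [interedges, Rel.interedges, card_filter, sum_product]

variable [DecidableEq V]

theorem Colorable.induce_insert {s : Finset V} {v : V} {n : ℕ}
    (hs : (G.induce (s : Set V)).Colorable n) (hv : #(s.filter (G.Adj v)) < n) :
    (G.induce ((insert v s : Finset V) : Set V)).Colorable n := by
  obtain ⟨f, hf, hproper⟩ := colorable_induce_iff_exists_bdd_nat.1 hs
  have hused : #((s.filter (G.Adj v)).image f) < #(range n) := by
    rw [card_range]; exact card_image_le.trans_lt hv
  obtain ⟨c, hcn, hc⟩ := exists_mem_notMem_of_card_lt_card hused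
  have hfree : ∀ w ∈ s, G.Adj v w → c ≠ f w := fun w hw hvw hcw =>
    hc (mem_image.2 ⟨w, mem_filter.2 ⟨hw, hvw⟩, hcw.symm⟩)
  refine colorable_induce_iff_exists_bdd_nat.2 ⟨Function.update f v c, ?_, ?_⟩
  · intro w hw
    rcases eq_or_ne w v with rfl | hwv
    · simpa using hcn
    · simpa [hwv] using hf w (by simpa [hwv] using hw)
  · intro a ha b hb hab
    simp only [coe_insert, Set.mem_insert_iff, mem_coe] at ha hb
    by_cases hav : a = v <;> by_cases hbv : b = v
    · exact absurd (hav.trans hbv.symm) hab.ne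
    · subst hav; simpa [hbv] using hfree b (hb.resolve_left hbv) hab
    · subst hbv; simpa [hav] using (hfree a (ha.resolve_left hav) hab.symm).symm
    · simpa [hav, hbv] using hproper a (ha.resolve_left hav) b (hb.resolve_left hbv) hab

theorem Colorable.induce_union_of_forall_exists_degree_lt {W A : Finset V} {n : ℕ}
    (hW : (G.induce (W : Set V)).Colorable n)
    (hA : ∀ A' ⊆ A, A'.Nonempty → ∃ v ∈ A', #((A' ∪ W).filter (G.Adj v)) < n) :
    (G.induce ((A ∪ W : Finset V) : Set V)).Colorable n := by
  induction A using Finset.strongInduction with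
  | H A ih =>
    rcases A.eq_empty_or_nonempty with rfl | hne
    · rwa [empty_union]
    obtain ⟨v, hv, hdeg⟩ := hA A Subset.rfl hne
    have hrest := ih (A.erase v) (erase_ssubset hv)
      fun A' hA' => hA A' (hA'.trans (erase_subset v A))
    rw [← insert_erase hv, insert_union]
    refine hrest.induce_insert (lt_of_le_of_lt (card_le_card ?_) hdeg)
    exact filter_subset_filter _ (union_subset_union (erase_subset v A) Subset.rfl)

theorem two_mul_edgesWithin [Fintype V] (A : Finset V) :
    2 * edgesWithin G A = #(G.interedges A A) := by
  classical
  set H := (G.induce (A : Set V)).spanningCoe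
  have hadj : ∀ v w, H.Adj v w ↔ G.Adj v w ∧ v ∈ A ∧ w ∈ A := by simp [H]
  have hedges : edgesWithin G A = #H.edgeFinset := by
    unfold edgesWithin
    congr 1
    ext e
    induction e using Sym2.ind
    simp [hadj]
  rw [hedges, H.two_mul_card_edgeFinset]
  congr 1
  ext ⟨v, w⟩
  simp only [hadj, mem_filter, mem_univ, true_and, interedges, Rel.mk_mem_interedges_iff]
  exact and_rotate

theorem edgesBetween_eq_card_interedges [Fintype V] {A C : Finset V} (hAC : Disjoint A C) :
    edgesBetween G A C = #(G.interedges A C) := by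
  have himage : (G.edgeFinset.filter fun e => ∃ a ∈ A, ∃ c ∈ C, e = s(a, c)) =
      (G.interedges A C).image fun p => s(p.1, p.2) := by
    ext e
    simp only [mem_filter, mem_image, mem_edgeFinset, Prod.exists, interedges,
      Rel.mk_mem_interedges_iff]
    constructor
    · rintro ⟨he, a, ha, c, hc, rfl⟩
      exact ⟨a, c, ⟨ha, hc, he⟩, rfl⟩
    · rintro ⟨a, c, ⟨ha, hc, hac⟩, rfl⟩
      exact ⟨hac, a, ha, c, hc, rfl⟩
  rw [edgesBetween, himage, card_image_of_injOn]
  rintro ⟨a, c⟩ hac ⟨a', c'⟩ hac' heq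
  simp only [mem_coe, interedges, Rel.mk_mem_interedges_iff] at hac hac'
  rcases Sym2.eq_iff.1 heq with ⟨rfl, rfl⟩ | ⟨rfl, rfl⟩
  · rfl
  · exact absurd hac.1 (disjoint_right.1 hAC hac'.2.1)

theorem exists_card_filter_adj_lt [Fintype V] {A C : Finset V} {n : ℕ} (hAC : Disjoint A C)
    (h : 2 * edgesWithin G A + edgesBetween G A C < n * #A) :
    ∃ v ∈ A, #((A ∪ C).filter (G.Adj v)) < n := by
  rw [two_mul_edgesWithin, edgesBetween_eq_card_interedges hAC, card_interedges_eq_sum,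
    card_interedges_eq_sum, ← sum_add_distrib, mul_comm, ← smul_eq_mul, ← sum_const] at h
  obtain ⟨v, hv, hlt⟩ := exists_lt_of_sum_lt h
  exact ⟨v, hv, by rw [filter_union]; exact (card_union_le _ _).trans_lt hlt⟩

end SimpleGraph

theorem stmt13_general {V : Type*} [Fintype V] [DecidableEq V] (G : SimpleGraph V) [DecidableRel G.Adj]
    (k ℓ : ℕ) (hℓk : ℓ ≤ k) (B S : Finset V) (hSB : S ⊆ B) (hScard : S.card ≤ ℓ)
    (hBScol : (G.induce ((B \ S : Finset V) : Set V)).Colorable (k - ℓ))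
    (h : ∀ A : Finset V, A ⊆ Bᶜ → A.Nonempty →
      2 * edgesWithin G A + edgesBetween G A (B \ S) < (k - ℓ) * A.card) :
    (G.induce ((Sᶜ : Finset V) : Set V)).Colorable (k - ℓ) ∧
      ((∀ s ∈ S, ∀ v : V, v ∉ S → G.Adj s v) →
       (∀ s ∈ S, ∀ s' ∈ S, s ≠ s' → G.Adj s s') → G.Colorable k) := by
  have hcompl : Bᶜ ∪ B \ S = Sᶜ := by
    ext v
    simp only [mem_union, mem_compl, mem_sdiff]
    have := @hSB v
    tauto
  have hSc : (G.induce ((Sᶜ : Finset V) : Set V)).Colorable (k - ℓ) := by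
    rw [← hcompl]
    refine hBScol.induce_union_of_forall_exists_degree_lt fun A hA hne => ?_
    have hdisj : Disjoint A (B \ S) :=
      disjoint_left.2 fun v hv hvB => mem_compl.1 (hA hv) (mem_sdiff.1 hvB).1
    exact SimpleGraph.exists_card_filter_adj_lt hdisj (h A hA hne)
  exact ⟨hSc, fun _ _ =>
    (SimpleGraph.colorable_add_card_of_colorable_induce_compl hSc).mono (by omega)⟩

theorem stmt13 {V : Type*} [Fintype V] [DecidableEq V] (G : SimpleGraph V) [DecidableRel G.Adj]
    (k ℓ : ℕ) (hℓk : ℓ ≤ k) (B S : Finset V) (hSB : S ⊆ B) (hScard : S.card ≤ ℓ)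
    (hBcol : (G.induce (B : Set V)).Colorable k)
    (hBScol : (G.induce ((B \ S : Finset V) : Set V)).Colorable (k - ℓ))
    (h : ∀ A : Finset V, A ⊆ Bᶜ → A.Nonempty →
      2 * edgesWithin G A + edgesBetween G A (B \ S) < (k - ℓ) * A.card) :
    (G.induce ((Sᶜ : Finset V) : Set V)).Colorable (k - ℓ) ∧
      ((∀ s ∈ S, ∀ v : V, v ∉ S → G.Adj s v) →
       (∀ s ∈ S, ∀ s' ∈ S, s ≠ s' → G.Adj s s') → G.Colorable k) :=
  stmt13_general G k ℓ hℓk B S hSB hScard hBScol h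
end
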